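/- arXiv:math/0702494 — 4 statements merged into one kernel-verified Lean document; each statement's English description precedes it below -/
import Mathlib

section
/- The set 𝒟(W) = {D ∈ 𝒟 : for every n ≥ 0 there is a matrix Λ_n(D) with D(P_n*) = P_n*·Λ_n(D)} is a subalgebra of 𝒟 (closed under addition, scalar multiplication and composition), and it does not depend on the choice of the orthogonal sequence: if {P_n} and {Q_n} are two sequences of matrix orthogonal polynomials with respect to W, then the sets defined using {P_n} and using {Q_n} coincide. -/
open Polynomial Matrix MeasureTheory
open scoped ComplexOrder

noncomputable section

/-- `L×L` matrix-valued polynomials. -/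
abbrev MP (L : ℕ) := Matrix (Fin L) (Fin L) (Polynomial ℂ)

/-- Entrywise derivative of a matrix polynomial. -/
def pder {L : ℕ} (P : MP L) : MP L := Matrix.of fun i j => Polynomial.derivative (P i j)

/-- Evaluation of a matrix polynomial at a real point. -/
def evalM {L : ℕ} (P : MP L) (t : ℝ) : Matrix (Fin L) (Fin L) ℂ :=
  Matrix.of fun i j => (P i j).eval (t : ℂ)

/-- `P*`: the matrix polynomial whose value at a real `t` is the conjugate transpose of
`P(t)`. -/
def starMP {L : ℕ} (P : MP L) : MP L :=
  Matrix.of fun i j => (P j i).map (starRingEnd ℂ)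

/-- An `L×L` matrix weight on the interval `(a,b)`: smooth, with positive definite
(Hermitian) values and finite moments. -/
structure MatrixWeight (L : ℕ) (a b : ℝ) where
  W : ℝ → Matrix (Fin L) (Fin L) ℂ
  smooth : ∀ i j, ContDiffOn ℝ (⊤ : ℕ∞) (fun t => W t i j) (Set.Ioo a b)
  posdef : ∀ t ∈ Set.Ioo a b, (W t).PosDef
  moments : ∀ (n : ℕ) (i j : Fin L),
    IntervalIntegrable (fun t => |t| ^ n * ‖W t i j‖) MeasureTheory.volume a b

/-- The matrix-valued pairing `(P,Q) = ∫ₐᵇ P(t) W(t) Q(t)* dt`. -/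
def mop {L : ℕ} {a b : ℝ} (Wt : MatrixWeight L a b) (P Q : MP L) :
    Matrix (Fin L) (Fin L) ℂ :=
  Matrix.of fun i j => ∫ t in a..b, (evalM P t * Wt.W t * (evalM Q t)ᴴ) i j

/-- A sequence of matrix orthogonal polynomials with respect to the weight `W`:
`deg Pₙ = n`, nonsingular leading coefficient, and `(Pₙ,Pₘ) = 0` for `n ≠ m`. -/
def IsMOPS {L : ℕ} {a b : ℝ} (Wt : MatrixWeight L a b) (P : ℕ → MP L) : Prop :=
  (∀ (n : ℕ) (i j : Fin L), ((P n) i j).degree ≤ (n : WithBot ℕ))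
    ∧ (∀ n : ℕ, ((P n).map fun q => q.coeff n).det ≠ 0)
    ∧ (∀ n m : ℕ, n ≠ m → mop Wt (P n) (P m) = 0)

/-- Membership in the class `𝒟` of differential operators `D = Σ_{i=0}^s F_i(t) dⁱ/dtⁱ`
with matrix polynomial coefficients `F_i` of degree at most `i`. -/
def InD {L : ℕ} (D : MP L → MP L) : Prop :=
  ∃ (s : ℕ) (F : ℕ → MP L),
    (∀ i : ℕ, i ≤ s → ∀ r c : Fin L, ((F i) r c).degree ≤ (i : WithBot ℕ))
      ∧ ∀ P : MP L, D P = ∑ i ∈ Finset.range (s+1), F i * pder^[i] P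

/-- Membership in the algebra `𝒟(W)`: operators in `𝒟` having all the `Pₙ*` as
eigenfunctions, `D(Pₙ*) = Pₙ*·Λₙ(D)`. -/
def DWmem {L : ℕ} {a b : ℝ} (Wt : MatrixWeight L a b) (P : ℕ → MP L)
    (D : MP L → MP L) : Prop :=
  InD D ∧ ∀ n : ℕ, ∃ Λ : Matrix (Fin L) (Fin L) ℂ,
    D (starMP (P n)) = starMP (P n) * Λ.map Polynomial.C


set_option maxHeartbeats 1000000

namespace DWaux
variable {L : ℕ}


def matC (M : Matrix (Fin L) (Fin L) ℂ) : MP L := M.map Polynomial.C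

lemma matC_mul (A B : Matrix (Fin L) (Fin L) ℂ) : matC (A * B) = matC A * matC B :=
  Matrix.map_mul (f := Polynomial.C)

lemma matC_add (A B : Matrix (Fin L) (Fin L) ℂ) : matC (A + B) = matC A + matC B :=
  Matrix.map_add _ (by simp) _ _

lemma pder_apply (P : MP L) (i j : Fin L) : pder P i j = Polynomial.derivative (P i j) := rfl

lemma pder_iter_apply (m : ℕ) (P : MP L) (i j : Fin L) :
    (pder^[m] P) i j = Polynomial.derivative^[m] (P i j) := by
  induction m generalizing P with
  | zero => rfl
  | succ m ih =>
      rw [Function.iterate_succ_apply, Function.iterate_succ_apply, ih, pder_apply]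

lemma iter_derivative_add (m : ℕ) (p q : Polynomial ℂ) :
    Polynomial.derivative^[m] (p + q)
      = Polynomial.derivative^[m] p + Polynomial.derivative^[m] q := by
  induction m with
  | zero => rfl
  | succ m ih => rw [Function.iterate_succ_apply', Function.iterate_succ_apply',
      Function.iterate_succ_apply', ih, derivative_add]

lemma iter_derivative_mul_C (m : ℕ) (p : Polynomial ℂ) (c : ℂ) :
    Polynomial.derivative^[m] (p * Polynomial.C c)
      = Polynomial.derivative^[m] p * Polynomial.C c := by
  induction m with
  | zero => rfl
  | succ m ih =>
      rw [Function.iterate_succ_apply', Function.iterate_succ_apply', ih, derivative_mul,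
        derivative_C, mul_zero, add_zero]

lemma pder_iter_add (m : ℕ) (P Q : MP L) :
    pder^[m] (P + Q) = pder^[m] P + pder^[m] Q := by
  refine Matrix.ext fun i j => ?_
  simp only [pder_iter_apply, Matrix.add_apply]
  exact iter_derivative_add m _ _

lemma pder_iter_sum {ι : Type*} (m : ℕ) (s : Finset ι) (f : ι → MP L) :
    pder^[m] (∑ x ∈ s, f x) = ∑ x ∈ s, pder^[m] (f x) := by
  classical
  induction s using Finset.induction with
  | empty =>
      refine Matrix.ext fun i j => ?_
      simp [pder_iter_apply, Polynomial.iterate_derivative_zero]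
  | insert _ _ hx ih => rw [Finset.sum_insert hx, Finset.sum_insert hx, pder_iter_add, ih]

lemma pder_iter_mul_matC (m : ℕ) (P : MP L) (M : Matrix (Fin L) (Fin L) ℂ) :
    pder^[m] (P * matC M) = pder^[m] P * matC M := by
  refine Matrix.ext fun i j => ?_
  simp only [pder_iter_apply, Matrix.mul_apply, matC, Matrix.map_apply]
  rw [Polynomial.iterate_derivative_sum]
  exact Finset.sum_congr rfl fun k _ => iter_derivative_mul_C m _ _

lemma rep_mul_matC (s : ℕ) (F : ℕ → MP L) (P : MP L) (M : Matrix (Fin L) (Fin L) ℂ) :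
    ∑ i ∈ Finset.range (s+1), F i * pder^[i] (P * matC M)
      = (∑ i ∈ Finset.range (s+1), F i * pder^[i] P) * matC M := by
  rw [Finset.sum_mul]
  exact Finset.sum_congr rfl fun i _ => by rw [pder_iter_mul_matC, mul_assoc]




lemma pder_iter_apply' (m : ℕ) (P : MP L) (i j : Fin L) :
    (pder^[m] P) i j = Polynomial.derivative^[m] (P i j) := by
  induction m generalizing P with
  | zero => rfl
  | succ m ih => rw [Function.iterate_succ_apply, Function.iterate_succ_apply, ih]; rfl

lemma degree_iter_derivative_le {p : Polynomial ℂ} {n : ℕ} (h : p.degree ≤ (n : WithBot ℕ))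
    (k : ℕ) : (Polynomial.derivative^[k] p).degree ≤ ((n - k : ℕ) : WithBot ℕ) := by
  rcases eq_or_ne (Polynomial.derivative^[k] p) 0 with h0 | h0
  · simp [h0]
  calc (Polynomial.derivative^[k] p).degree
      ≤ ((Polynomial.derivative^[k] p).natDegree : WithBot ℕ) := degree_le_natDegree
    _ ≤ ((n - k : ℕ) : WithBot ℕ) := by
        have h1 : (Polynomial.derivative^[k] p).natDegree ≤ p.natDegree - k :=
          natDegree_iterate_derivative p k
        have h2 : p.natDegree ≤ n := natDegree_le_iff_degree_le.mpr h
        exact_mod_cast le_trans h1 (Nat.sub_le_sub_right h2 k)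

lemma truncate_sum (s t : ℕ) (hst : s ≤ t) (F : ℕ → MP L) (P : MP L) :
    ∑ i ∈ Finset.range (t+1), (if i ≤ s then F i else 0) * pder^[i] P
      = ∑ i ∈ Finset.range (s+1), F i * pder^[i] P := by
  rw [← Finset.sum_subset (Finset.range_subset_range.mpr (Nat.add_le_add_right hst 1))
    (fun x _ hx => ?_)]
  · exact Finset.sum_congr rfl fun i hi => by
      rw [if_pos (Nat.lt_succ_iff.mp (Finset.mem_range.mp hi))]
  · rw [if_neg (by simpa [Nat.lt_succ_iff] using hx), zero_mul]

lemma InD_add {D₁ D₂ : MP L → MP L} (h₁ : InD D₁) (h₂ : InD D₂) :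
    InD (fun F => D₁ F + D₂ F) := by
  obtain ⟨s₁, F, hF, hrep₁⟩ := h₁
  obtain ⟨s₂, G, hG, hrep₂⟩ := h₂
  refine ⟨max s₁ s₂, fun i => (if i ≤ s₁ then F i else 0) + (if i ≤ s₂ then G i else 0),
    fun i hi r c => ?_, fun P => ?_⟩
  · simp only [Matrix.add_apply]
    refine le_trans (Polynomial.degree_add_le _ _) (max_le ?_ ?_) <;> split <;>
      simp_all [hF, hG]
  · show D₁ P + D₂ P = _
    simp only [add_mul, Finset.sum_add_distrib]
    rw [truncate_sum s₁ _ (le_max_left _ _), truncate_sum s₂ _ (le_max_right _ _),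
      hrep₁, hrep₂]

lemma InD_smul (c : ℂ) {D : MP L → MP L} (h : InD D) : InD (fun F => c • D F) := by
  obtain ⟨s, F, hF, hrep⟩ := h
  refine ⟨s, fun i => c • F i, fun i hi r c' => ?_, fun P => ?_⟩
  · exact le_trans (Polynomial.degree_smul_le _ _) (hF i hi r c')
  · show c • D P = _
    rw [hrep, Finset.smul_sum]
    exact Finset.sum_congr rfl fun i _ => by rw [smul_mul_assoc]

lemma pder_iter_sum' {ι : Type*} (m : ℕ) (s : Finset ι) (f : ι → MP L) :
    pder^[m] (∑ x ∈ s, f x) = ∑ x ∈ s, pder^[m] (f x) := by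
  refine Matrix.ext fun i j => ?_
  simp [pder_iter_apply', Matrix.sum_apply, Polynomial.iterate_derivative_sum]

lemma pder_iter_matmul (m : ℕ) (A B : MP L) :
    pder^[m] (A * B) = ∑ k ∈ Finset.range (m+1),
      (m.choose k) • (pder^[m-k] A * pder^[k] B) := by
  refine Matrix.ext fun i j => ?_
  simp only [pder_iter_apply', Matrix.mul_apply, Matrix.sum_apply, Matrix.smul_apply]
  rw [Polynomial.iterate_derivative_sum]
  calc ∑ b, Polynomial.derivative^[m] (A i b * B b j)
      = ∑ b, ∑ k ∈ Finset.range (m+1), (m.choose k) •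
          (Polynomial.derivative^[m-k] (A i b) * Polynomial.derivative^[k] (B b j)) :=
        Finset.sum_congr rfl fun b _ => Polynomial.iterate_derivative_mul _ _
    _ = ∑ k ∈ Finset.range (m+1), ∑ b, (m.choose k) •
          (Polynomial.derivative^[m-k] (A i b) * Polynomial.derivative^[k] (B b j)) :=
        Finset.sum_comm
    _ = _ := by
        refine Finset.sum_congr rfl fun k _ => ?_
        rw [Finset.smul_sum]

lemma degree_nsmul_le (n : ℕ) (p : Polynomial ℂ) : (n • p).degree ≤ p.degree := by
  rw [nsmul_eq_mul]
  refine le_trans (Polynomial.degree_mul_le _ _) ?_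
  calc ((n : Polynomial ℂ)).degree + p.degree ≤ 0 + p.degree :=
        add_le_add_left (Polynomial.degree_natCast_le n) _
    _ = p.degree := by rw [zero_add]

/-- degree bound for one composition term -/
lemma comp_term_degree {F G : MP L} {i j k m : ℕ}
    (hF : ∀ r c, (F r c).degree ≤ (i : WithBot ℕ))
    (hG : ∀ r c, (G r c).degree ≤ (j : WithBot ℕ))
    (heq : m + k = i + j) (hk : k ≤ i) (r c : Fin L) :
    ((((i.choose k) • (F * pder^[k] G)) : MP L) r c).degree ≤ (m : WithBot ℕ) := by
  rcases le_or_gt k j with hkj | hjk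
  · refine le_trans (by exact degree_nsmul_le _ _ : ((i.choose k) • ((F * pder^[k] G) r c)).degree ≤ _) ?_
    simp only [Matrix.mul_apply]
    refine le_trans (Polynomial.degree_sum_le _ _) (Finset.sup_le fun l _ => ?_)
    refine le_trans (Polynomial.degree_mul_le _ _) ?_
    have h2 : ((pder^[k] G) l c).degree ≤ ((j - k : ℕ) : WithBot ℕ) := by
      rw [pder_iter_apply']
      exact degree_iter_derivative_le (hG l c) k
    refine le_trans (add_le_add (hF r l) h2) ?_
    have hnat : i + (j - k) = m := by omega
    rw [← Nat.cast_add, hnat]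
  · have hzero : pder^[k] G = 0 := by
      refine Matrix.ext fun l c' => ?_
      rw [pder_iter_apply']
      refine Polynomial.iterate_derivative_eq_zero ?_
      rcases eq_or_ne (G l c') 0 with h0 | h0
      · simp only [h0, Polynomial.natDegree_zero]; omega
      · have : (G l c').natDegree ≤ j := Polynomial.natDegree_le_iff_degree_le.mpr (hG l c')
        omega
    simp [hzero]

lemma InD_comp {D₁ D₂ : MP L → MP L} (h₁ : InD D₁) (h₂ : InD D₂) : InD (D₁ ∘ D₂) := by
  classical
  obtain ⟨s₁, F, hF, hrep₁⟩ := h₁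
  obtain ⟨s₂, G, hG, hrep₂⟩ := h₂
  refine ⟨s₁ + s₂, fun m => ∑ i ∈ Finset.range (s₁+1), ∑ j ∈ Finset.range (s₂+1),
      ∑ k ∈ Finset.range (i+1), if m + k = i + j then (i.choose k) • (F i * pder^[k] (G j))
        else 0, fun m hm r c => ?_, fun P => ?_⟩
  · -- degree bound
    simp only [Matrix.sum_apply]
    refine le_trans (Polynomial.degree_sum_le _ _) (Finset.sup_le fun i hi => ?_)
    refine le_trans (Polynomial.degree_sum_le _ _) (Finset.sup_le fun j hj => ?_)
    refine le_trans (Polynomial.degree_sum_le _ _) (Finset.sup_le fun k hk => ?_)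
    simp only [Finset.mem_range, Nat.lt_succ_iff] at hi hj hk
    split
    · next heq =>
        exact comp_term_degree (hF i hi) (hG j hj) heq hk r c
    · simp
  · -- representation
    show D₁ (D₂ P) = _
    have main : ∑ i ∈ Finset.range (s₁+1),
          F i * pder^[i] (∑ j ∈ Finset.range (s₂+1), G j * pder^[j] P)
        = ∑ m ∈ Finset.range (s₁+s₂+1), (∑ i ∈ Finset.range (s₁+1),
            ∑ j ∈ Finset.range (s₂+1), ∑ k ∈ Finset.range (i+1),
              if m + k = i + j then (i.choose k) • (F i * pder^[k] (G j)) else 0)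
                * pder^[m] P := ?_
    · rw [hrep₂, hrep₁ _]; exact main
    -- LHS normal form
    have lhs_eq : ∀ i : ℕ, F i * pder^[i] (∑ j ∈ Finset.range (s₂+1), G j * pder^[j] P)
        = ∑ j ∈ Finset.range (s₂+1), ∑ k ∈ Finset.range (i+1),
            (i.choose k) • (F i * (pder^[i-k] (G j) * pder^[k+j] P)) := by
      intro i
      rw [pder_iter_sum', Finset.mul_sum]
      refine Finset.sum_congr rfl fun j _ => ?_
      rw [pder_iter_matmul, Finset.mul_sum]
      refine Finset.sum_congr rfl fun k _ => ?_
      rw [mul_smul_comm, Function.iterate_add_apply]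
    -- RHS normal form
    have rhs_eq : ∀ i ∈ Finset.range (s₁+1), ∀ j ∈ Finset.range (s₂+1),
        ∀ k ∈ Finset.range (i+1),
        (∑ m ∈ Finset.range (s₁+s₂+1),
          (if m + k = i + j then (i.choose k) • (F i * pder^[k] (G j)) else 0) * pder^[m] P)
          = (i.choose k) • (F i * pder^[k] (G j)) * pder^[i+j-k] P := by
      intro i hi j hj k hk
      simp only [Finset.mem_range, Nat.lt_succ_iff] at hi hj hk
      have hcond : ∀ m : ℕ, (m + k = i + j) = (m = i + j - k) := by
        intro m; apply propext; omega
      calc (∑ m ∈ Finset.range (s₁+s₂+1),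
          (if m + k = i + j then (i.choose k) • (F i * pder^[k] (G j)) else 0) * pder^[m] P)
          = ∑ m ∈ Finset.range (s₁+s₂+1),
            (if m = i + j - k then (i.choose k) • (F i * pder^[k] (G j)) * pder^[m] P else 0) := by
            refine Finset.sum_congr rfl fun m _ => ?_
            by_cases h : m = i + j - k
            · rw [if_pos (by omega), if_pos h]
            · rw [if_neg (by omega), if_neg h, zero_mul]
        _ = _ := by
            rw [Finset.sum_ite_eq' (Finset.range (s₁+s₂+1)) (i+j-k)
              (fun m => (i.choose k) • (F i * pder^[k] (G j)) * pder^[m] P),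
              if_pos (Finset.mem_range.mpr (by omega))]
    calc ∑ i ∈ Finset.range (s₁+1),
          F i * pder^[i] (∑ j ∈ Finset.range (s₂+1), G j * pder^[j] P)
        = ∑ i ∈ Finset.range (s₁+1), ∑ j ∈ Finset.range (s₂+1), ∑ k ∈ Finset.range (i+1),
            (i.choose k) • (F i * (pder^[i-k] (G j) * pder^[k+j] P)) :=
          Finset.sum_congr rfl fun i _ => lhs_eq i
      _ = ∑ i ∈ Finset.range (s₁+1), ∑ j ∈ Finset.range (s₂+1), ∑ k ∈ Finset.range (i+1),
            (i.choose k) • (F i * pder^[k] (G j)) * pder^[i+j-k] P := by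
          refine Finset.sum_congr rfl fun i _ => Finset.sum_congr rfl fun j _ => ?_
          rw [← Finset.sum_range_reflect]
          refine Finset.sum_congr rfl fun k hk => ?_
          have hk' : k ≤ i := by
            simp only [Finset.mem_range, Nat.lt_succ_iff] at hk; omega
          simp only [Nat.add_sub_cancel]
          rw [Nat.choose_symm hk']
          have e3 : i - (i - k) = k := by omega
          have e4 : i - k + j = i + j - k := by omega
          rw [e3, e4, smul_mul_assoc, mul_assoc]
      _ = ∑ m ∈ Finset.range (s₁+s₂+1), (∑ i ∈ Finset.range (s₁+1), ∑ j ∈ Finset.range (s₂+1),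
            ∑ k ∈ Finset.range (i+1),
              if m + k = i + j then (i.choose k) • (F i * pder^[k] (G j)) else 0) * pder^[m] P := by
          symm
          calc ∑ m ∈ Finset.range (s₁+s₂+1), (∑ i ∈ Finset.range (s₁+1),
                ∑ j ∈ Finset.range (s₂+1), ∑ k ∈ Finset.range (i+1),
                  if m + k = i + j then (i.choose k) • (F i * pder^[k] (G j)) else 0)
                    * pder^[m] P
              = ∑ m ∈ Finset.range (s₁+s₂+1), ∑ i ∈ Finset.range (s₁+1),
                  ∑ j ∈ Finset.range (s₂+1), ∑ k ∈ Finset.range (i+1),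
                    (if m + k = i + j then (i.choose k) • (F i * pder^[k] (G j)) else 0)
                      * pder^[m] P := by simp only [Finset.sum_mul]
            _ = ∑ i ∈ Finset.range (s₁+1), ∑ m ∈ Finset.range (s₁+s₂+1),
                  ∑ j ∈ Finset.range (s₂+1), ∑ k ∈ Finset.range (i+1),
                    (if m + k = i + j then (i.choose k) • (F i * pder^[k] (G j)) else 0)
                      * pder^[m] P := Finset.sum_comm
            _ = ∑ i ∈ Finset.range (s₁+1), ∑ j ∈ Finset.range (s₂+1),
                  ∑ m ∈ Finset.range (s₁+s₂+1), ∑ k ∈ Finset.range (i+1),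
                    (if m + k = i + j then (i.choose k) • (F i * pder^[k] (G j)) else 0)
                      * pder^[m] P :=
                Finset.sum_congr rfl fun i _ => Finset.sum_comm
            _ = ∑ i ∈ Finset.range (s₁+1), ∑ j ∈ Finset.range (s₂+1),
                  ∑ k ∈ Finset.range (i+1), ∑ m ∈ Finset.range (s₁+s₂+1),
                    (if m + k = i + j then (i.choose k) • (F i * pder^[k] (G j)) else 0)
                      * pder^[m] P :=
                Finset.sum_congr rfl fun i _ => Finset.sum_congr rfl fun j _ =>
                  Finset.sum_comm
            _ = ∑ i ∈ Finset.range (s₁+1), ∑ j ∈ Finset.range (s₂+1),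
                  ∑ k ∈ Finset.range (i+1),
                    (i.choose k) • (F i * pder^[k] (G j)) * pder^[i+j-k] P :=
                Finset.sum_congr rfl fun i hi => Finset.sum_congr rfl fun j hj =>
                  Finset.sum_congr rfl fun k hk => rhs_eq i hi j hj k hk



lemma evalM_apply (P : MP L) (t : ℝ) (i j : Fin L) : evalM P t i j = (P i j).eval (t:ℂ) := rfl

lemma evalM_sum {ι : Type*} (s : Finset ι) (f : ι → MP L) (t : ℝ) :
    evalM (∑ x ∈ s, f x) t = ∑ x ∈ s, evalM (f x) t := by
  refine Matrix.ext fun i j => ?_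
  simp [evalM_apply, Matrix.sum_apply, Polynomial.eval_finset_sum]

lemma evalM_mul (A B : MP L) (t : ℝ) : evalM (A * B) t = evalM A t * evalM B t := by
  refine Matrix.ext fun i j => ?_
  simp [evalM_apply, Matrix.mul_apply, Polynomial.eval_finset_sum]

lemma evalM_matC (M : Matrix (Fin L) (Fin L) ℂ) (t : ℝ) : evalM (matC M) t = M := by
  refine Matrix.ext fun i j => ?_
  simp [evalM_apply, matC]

variable {a b : ℝ}

section Integrability
variable (hab : a < b) (Wt : MatrixWeight L a b)

lemma W_continuousOn (k l : Fin L) : ContinuousOn (fun t => Wt.W t k l) (Set.Ioo a b) :=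
  (Wt.smooth k l).continuousOn

include hab in
lemma term_integrable (p q : Polynomial ℂ) (k l : Fin L) :
    IntervalIntegrable
      (fun t : ℝ => p.eval (t:ℂ) * Wt.W t k l * (starRingEnd ℂ) (q.eval (t:ℂ)))
      volume a b := by
  obtain ⟨M₁, hM₁⟩ := isCompact_Icc.exists_bound_of_continuousOn
    (f := fun t : ℝ => p.eval (t:ℂ))
    (((p.continuous_aeval).comp Complex.continuous_ofReal).continuousOn)
  obtain ⟨M₂, hM₂⟩ := isCompact_Icc.exists_bound_of_continuousOn
    (f := fun t : ℝ => q.eval (t:ℂ))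
    (((q.continuous_aeval).comp Complex.continuous_ofReal).continuousOn)
  have hM₁0 : 0 ≤ M₁ := le_trans (norm_nonneg _) (hM₁ a ⟨le_refl a, hab.le⟩)
  have hM₂0 : 0 ≤ M₂ := le_trans (norm_nonneg _) (hM₂ a ⟨le_refl a, hab.le⟩)
  have hg : IntervalIntegrable (fun t => M₁ * M₂ * (|t| ^ 0 * ‖Wt.W t k l‖)) volume a b :=
    (Wt.moments 0 k l).const_mul (M₁ * M₂)
  refine IntervalIntegrable.mono_fun' hg ?_ ?_
  · -- a.e. strong measurability on Ι a b = Ioc a b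
    rw [Set.uIoc_of_le hab.le, ← Measure.restrict_congr_set Ioo_ae_eq_Ioc]
    refine ContinuousOn.aestronglyMeasurable ?_ measurableSet_Ioo
    refine ContinuousOn.mul (ContinuousOn.mul ?_ (W_continuousOn Wt k l)) ?_
    · exact ((p.continuous_aeval).comp Complex.continuous_ofReal).continuousOn
    · exact (Complex.continuous_conj.comp
        ((q.continuous_aeval).comp Complex.continuous_ofReal)).continuousOn
  · rw [Set.uIoc_of_le hab.le, Filter.EventuallyLE, ae_restrict_iff' measurableSet_Ioc]
    filter_upwards with t ht
    have htIcc : t ∈ Set.Icc a b := Set.Ioc_subset_Icc_self ht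
    have h1 := hM₁ t htIcc
    have h2 := hM₂ t htIcc
    simp only [norm_mul, RCLike.norm_conj, pow_zero, one_mul]
    calc ‖p.eval (t:ℂ)‖ * ‖Wt.W t k l‖ * ‖q.eval (t:ℂ)‖
        ≤ M₁ * ‖Wt.W t k l‖ * M₂ := by gcongr
      _ = M₁ * M₂ * ‖Wt.W t k l‖ := by ring

include hab in
lemma intervalIntegrable_sum {ι : Type*} (s : Finset ι) (f : ι → ℝ → ℂ)
    (h : ∀ k ∈ s, IntervalIntegrable (f k) volume a b) :
    IntervalIntegrable (fun t => ∑ k ∈ s, f k t) volume a b := by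
  have h2 := IntervalIntegrable.sum (μ := volume) (a := a) (b := b) s h
  have e : (∑ k ∈ s, f k) = fun t => ∑ k ∈ s, f k t := by
    funext t; simp [Finset.sum_apply]
  rwa [e] at h2

include hab in
lemma entry_integrable (X Y : MP L) (i j : Fin L) :
    IntervalIntegrable (fun t => (evalM X t * Wt.W t * (evalM Y t)ᴴ) i j) volume a b := by
  have heq : (fun t => (evalM X t * Wt.W t * (evalM Y t)ᴴ) i j)
      = fun t : ℝ => ∑ k : Fin L, ∑ l : Fin L,
          (X i l).eval (t:ℂ) * Wt.W t l k * (starRingEnd ℂ) ((Y j k).eval (t:ℂ)) := by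
    funext t
    simp [Matrix.mul_apply, Matrix.conjTranspose_apply, evalM_apply, Finset.sum_mul]
  rw [heq]
  refine intervalIntegrable_sum hab Finset.univ
    (fun k (t : ℝ) => ∑ l : Fin L,
      (X i l).eval (t:ℂ) * Wt.W t l k * (starRingEnd ℂ) ((Y j k).eval (t:ℂ)))
    (fun k _ => ?_)
  exact intervalIntegrable_sum hab Finset.univ
    (fun l (t : ℝ) =>
      (X i l).eval (t:ℂ) * Wt.W t l k * (starRingEnd ℂ) ((Y j k).eval (t:ℂ)))
    (fun l _ => term_integrable hab Wt (X i l) (Y j k) l k)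

omit hab in
lemma mop_apply (Wt : MatrixWeight L a b) (P Q : MP L) (i j : Fin L) :
    mop Wt P Q i j = ∫ t in a..b, (evalM P t * Wt.W t * (evalM Q t)ᴴ) i j := rfl

include hab in
lemma mop_sum_matC_left {ι : Type*} (s : Finset ι) (Mk : ι → Matrix (Fin L) (Fin L) ℂ)
    (Rk : ι → MP L) (Y : MP L) :
    mop Wt (∑ k ∈ s, matC (Mk k) * Rk k) Y = ∑ k ∈ s, Mk k * mop Wt (Rk k) Y := by
  refine Matrix.ext fun i j => ?_
  rw [mop_apply]
  have heq : ∀ t : ℝ, (evalM (∑ k ∈ s, matC (Mk k) * Rk k) t * Wt.W t * (evalM Y t)ᴴ) i j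
      = ∑ k ∈ s, ∑ l : Fin L, Mk k i l * (evalM (Rk k) t * Wt.W t * (evalM Y t)ᴴ) l j := by
    intro t
    rw [evalM_sum]
    have : (∑ k ∈ s, evalM (matC (Mk k) * Rk k) t) = ∑ k ∈ s, Mk k * evalM (Rk k) t :=
      Finset.sum_congr rfl fun k _ => by rw [evalM_mul, evalM_matC]
    rw [this, Finset.sum_mul, Finset.sum_mul, Matrix.sum_apply]
    refine Finset.sum_congr rfl fun k _ => ?_
    rw [Matrix.mul_assoc, Matrix.mul_assoc, Matrix.mul_apply]
    exact Finset.sum_congr rfl fun l _ => by rw [← Matrix.mul_assoc]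
  simp only [heq]
  calc (∫ t in a..b, ∑ k ∈ s, ∑ l : Fin L,
          Mk k i l * (evalM (Rk k) t * Wt.W t * (evalM Y t)ᴴ) l j)
      = ∑ k ∈ s, ∫ t in a..b, ∑ l : Fin L,
          Mk k i l * (evalM (Rk k) t * Wt.W t * (evalM Y t)ᴴ) l j :=
        intervalIntegral.integral_finset_sum
          (f := fun k (t : ℝ) => ∑ l : Fin L,
            Mk k i l * (evalM (Rk k) t * Wt.W t * (evalM Y t)ᴴ) l j)
          (fun k _ => intervalIntegrable_sum hab Finset.univ
            (fun l (t : ℝ) =>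
              Mk k i l * (evalM (Rk k) t * Wt.W t * (evalM Y t)ᴴ) l j)
            (fun l _ => (entry_integrable hab Wt (Rk k) Y l j).const_mul _))
    _ = ∑ k ∈ s, ∑ l : Fin L, ∫ t in a..b,
          Mk k i l * (evalM (Rk k) t * Wt.W t * (evalM Y t)ᴴ) l j :=
        Finset.sum_congr rfl fun k _ => intervalIntegral.integral_finset_sum
          (f := fun l (t : ℝ) =>
            Mk k i l * (evalM (Rk k) t * Wt.W t * (evalM Y t)ᴴ) l j)
          (fun l _ => (entry_integrable hab Wt (Rk k) Y l j).const_mul _)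
    _ = (∑ k ∈ s, Mk k * mop Wt (Rk k) Y) i j := by
        rw [Matrix.sum_apply]
        refine Finset.sum_congr rfl fun k _ => ?_
        rw [Matrix.mul_apply]
        exact Finset.sum_congr rfl fun l _ => intervalIntegral.integral_const_mul _ _

include hab in
lemma mop_sum_matC_right {ι : Type*} (s : Finset ι) (Bk : ι → Matrix (Fin L) (Fin L) ℂ)
    (Rk : ι → MP L) (X : MP L) :
    mop Wt X (∑ k ∈ s, matC (Bk k) * Rk k) = ∑ k ∈ s, mop Wt X (Rk k) * (Bk k)ᴴ := by
  refine Matrix.ext fun i j => ?_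
  rw [mop_apply]
  have heq : ∀ t : ℝ, (evalM X t * Wt.W t * (evalM (∑ k ∈ s, matC (Bk k) * Rk k) t)ᴴ) i j
      = ∑ k ∈ s, ∑ l : Fin L,
          (evalM X t * Wt.W t * (evalM (Rk k) t)ᴴ) i l * (Bk k)ᴴ l j := by
    intro t
    rw [evalM_sum]
    have : (∑ k ∈ s, evalM (matC (Bk k) * Rk k) t)ᴴ
        = ∑ k ∈ s, (evalM (Rk k) t)ᴴ * (Bk k)ᴴ := by
      rw [Matrix.conjTranspose_sum]
      exact Finset.sum_congr rfl fun k _ => by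
        rw [evalM_mul, evalM_matC, Matrix.conjTranspose_mul]
    rw [this, Finset.mul_sum, Matrix.sum_apply]
    exact Finset.sum_congr rfl fun k _ => by
      rw [← Matrix.mul_assoc, Matrix.mul_apply]
  simp only [heq]
  calc (∫ t in a..b, ∑ k ∈ s, ∑ l : Fin L,
          (evalM X t * Wt.W t * (evalM (Rk k) t)ᴴ) i l * (Bk k)ᴴ l j)
      = ∑ k ∈ s, ∫ t in a..b, ∑ l : Fin L,
          (evalM X t * Wt.W t * (evalM (Rk k) t)ᴴ) i l * (Bk k)ᴴ l j :=
        intervalIntegral.integral_finset_sum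
          (f := fun k (t : ℝ) => ∑ l : Fin L,
            (evalM X t * Wt.W t * (evalM (Rk k) t)ᴴ) i l * (Bk k)ᴴ l j)
          (fun k _ => intervalIntegrable_sum hab Finset.univ
            (fun l (t : ℝ) =>
              (evalM X t * Wt.W t * (evalM (Rk k) t)ᴴ) i l * (Bk k)ᴴ l j)
            (fun l _ => (entry_integrable hab Wt X (Rk k) i l).mul_const _))
    _ = ∑ k ∈ s, ∑ l : Fin L, ∫ t in a..b,
          (evalM X t * Wt.W t * (evalM (Rk k) t)ᴴ) i l * (Bk k)ᴴ l j :=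
        Finset.sum_congr rfl fun k _ => intervalIntegral.integral_finset_sum
          (f := fun l (t : ℝ) =>
            (evalM X t * Wt.W t * (evalM (Rk k) t)ᴴ) i l * (Bk k)ᴴ l j)
          (fun l _ => (entry_integrable hab Wt X (Rk k) i l).mul_const _)
    _ = (∑ k ∈ s, mop Wt X (Rk k) * (Bk k)ᴴ) i j := by
        rw [Matrix.sum_apply]
        refine Finset.sum_congr rfl fun k _ => ?_
        rw [Matrix.mul_apply]
        exact Finset.sum_congr rfl fun l _ => intervalIntegral.integral_mul_const _ _

end Integrability

section Positivity
variable (hab : a < b) (Wt : MatrixWeight L a b)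

lemma entry_expand (X Y : MP L) (i j : Fin L) :
    (fun t : ℝ => (evalM X t * Wt.W t * (evalM Y t)ᴴ) i j)
      = fun t : ℝ => ∑ k : Fin L, ∑ l : Fin L,
          (X i l).eval (t:ℂ) * Wt.W t l k * (starRingEnd ℂ) ((Y j k).eval (t:ℂ)) := by
  funext t
  simp [Matrix.mul_apply, Matrix.conjTranspose_apply, evalM_apply, Finset.sum_mul]

lemma entry_continuousOn (X Y : MP L) (i j : Fin L) :
    ContinuousOn (fun t : ℝ => (evalM X t * Wt.W t * (evalM Y t)ᴴ) i j) (Set.Ioo a b) := by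
  rw [entry_expand]
  refine continuousOn_finset_sum _ fun k _ => continuousOn_finset_sum _ fun l _ => ?_
  refine ContinuousOn.mul (ContinuousOn.mul ?_ ((Wt.smooth l k).continuousOn)) ?_
  · exact (((X i l).continuous_aeval).comp Complex.continuous_ofReal).continuousOn
  · exact (Complex.continuous_conj.comp
      (((Y j k).continuous_aeval).comp Complex.continuous_ofReal)).continuousOn

lemma quad_expand (M : Matrix (Fin L) (Fin L) ℂ) (x : Fin L → ℂ) :
    star x ⬝ᵥ (M *ᵥ x) = ∑ i : Fin L, ∑ j : Fin L, star x i * M i j * x j := by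
  simp [dotProduct, Matrix.mulVec, Finset.mul_sum, mul_assoc, mul_comm, mul_left_comm]

lemma quad_conj (E W : Matrix (Fin L) (Fin L) ℂ) (x : Fin L → ℂ) :
    star x ⬝ᵥ ((E * W * Eᴴ) *ᵥ x) = star (Eᴴ *ᵥ x) ⬝ᵥ (W *ᵥ (Eᴴ *ᵥ x)) := by
  rw [← Matrix.mulVec_mulVec, ← Matrix.mulVec_mulVec, Matrix.dotProduct_mulVec,
    Matrix.star_mulVec, Matrix.conjTranspose_conjTranspose, ← Matrix.dotProduct_mulVec]

include hab in
lemma mop_self_isUnit (R : MP L) (m : ℕ)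
    (hdet : ((R).map fun q => q.coeff m).det ≠ 0) : IsUnit (mop Wt R R) := by
  classical
  rw [Matrix.isUnit_iff_isUnit_det, isUnit_iff_ne_zero]
  intro hdet0
  obtain ⟨x, hx0, hxv⟩ := Matrix.exists_mulVec_eq_zero_iff.mpr hdet0
  -- the quadratic form along the weight
  set g : ℝ → ℂ := fun t => star x ⬝ᵥ ((evalM R t * Wt.W t * (evalM R t)ᴴ) *ᵥ x) with hg
  set f : ℝ → ℝ := fun t => (g t).re with hf
  set y : ℝ → (Fin L → ℂ) := fun t => (evalM R t)ᴴ *ᵥ x with hy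
  -- integrability of g
  have hgexp : g = fun t => ∑ i : Fin L, ∑ j : Fin L,
      star x i * (evalM R t * Wt.W t * (evalM R t)ᴴ) i j * x j := by
    funext t; exact quad_expand _ _
  have hgint : IntervalIntegrable g volume a b := by
    rw [hgexp]
    refine intervalIntegrable_sum hab Finset.univ
      (fun i (t : ℝ) => ∑ j : Fin L,
        star x i * (evalM R t * Wt.W t * (evalM R t)ᴴ) i j * x j) (fun i _ => ?_)
    exact intervalIntegrable_sum hab Finset.univ
      (fun j (t : ℝ) => star x i * (evalM R t * Wt.W t * (evalM R t)ᴴ) i j * x j)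
      (fun j _ => ((entry_integrable hab Wt R R i j).const_mul _).mul_const _)
  have hfint : IntervalIntegrable f volume a b :=
    ⟨Complex.reCLM.integrable_comp hgint.1, Complex.reCLM.integrable_comp hgint.2⟩
  -- the integral of g is the quadratic form of mop, which vanishes
  have hgzero : (∫ t in a..b, g t) = 0 := by
    have h1 : (∫ t in a..b, g t) = ∑ i : Fin L, ∑ j : Fin L,
        star x i * (mop Wt R R) i j * x j := by
      rw [hgexp]
      calc (∫ t in a..b, ∑ i : Fin L, ∑ j : Fin L,
              star x i * (evalM R t * Wt.W t * (evalM R t)ᴴ) i j * x j)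
          = ∑ i : Fin L, ∫ t in a..b, ∑ j : Fin L,
              star x i * (evalM R t * Wt.W t * (evalM R t)ᴴ) i j * x j :=
            intervalIntegral.integral_finset_sum
              (f := fun i (t : ℝ) => ∑ j : Fin L,
                star x i * (evalM R t * Wt.W t * (evalM R t)ᴴ) i j * x j)
              (fun i _ => intervalIntegrable_sum hab Finset.univ _
                (fun j _ => ((entry_integrable hab Wt R R i j).const_mul _).mul_const _))
        _ = ∑ i : Fin L, ∑ j : Fin L, ∫ t in a..b,
              star x i * (evalM R t * Wt.W t * (evalM R t)ᴴ) i j * x j :=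
            Finset.sum_congr rfl fun i _ => intervalIntegral.integral_finset_sum
              (f := fun j (t : ℝ) =>
                star x i * (evalM R t * Wt.W t * (evalM R t)ᴴ) i j * x j)
              (fun j _ => ((entry_integrable hab Wt R R i j).const_mul _).mul_const _)
        _ = ∑ i : Fin L, ∑ j : Fin L, star x i * (mop Wt R R) i j * x j := by
            refine Finset.sum_congr rfl fun i _ => Finset.sum_congr rfl fun j _ => ?_
            rw [intervalIntegral.integral_mul_const, intervalIntegral.integral_const_mul,
              mop_apply]
    rw [h1, ← quad_expand, hxv, dotProduct_zero]
  have hfzero : (∫ t in a..b, f t) = 0 := by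
    have := Complex.reCLM.intervalIntegral_comp_comm hgint
    rw [hf]
    have h2 : (fun t => (g t).re) = fun t => Complex.reCLM (g t) := rfl
    rw [h2, this, hgzero]
    simp
  -- pointwise values of the quadratic form
  have hgy : ∀ t : ℝ, g t = star (y t) ⬝ᵥ (Wt.W t *ᵥ y t) := fun t => quad_conj _ _ _
  have hnonneg : ∀ t ∈ Set.Ioo a b, 0 ≤ f t := by
    intro t ht
    have := ((Wt.posdef t ht).posSemidef).re_dotProduct_nonneg (y t)
    rw [RCLike.re_to_complex] at this
    rw [hf]
    simpa [hgy t] using this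
  -- a point where y is nonzero
  have hex : ∃ t₀ ∈ Set.Ioo a b, y t₀ ≠ 0 := by
    by_contra hall
    push_neg at hall
    have hpoly : ∀ k : Fin L,
        (∑ j : Fin L, R j k * Polynomial.C ((starRingEnd ℂ) (x j))) = 0 := by
      intro k
      apply Polynomial.eq_zero_of_infinite_isRoot
      refine Set.Infinite.mono ?_ ((Set.Ioo_infinite hab).image
        (Complex.ofReal_injective.injOn))
      rintro z ⟨t, ht, rfl⟩
      have hyt : y t = 0 := hall t ht
      have hytk : y t k = 0 := by rw [hyt]; rfl
      have : (∑ j : Fin L, R j k * Polynomial.C ((starRingEnd ℂ) (x j))).eval (t:ℂ)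
          = (starRingEnd ℂ) (y t k) := by
        rw [hy]
        simp [Matrix.mulVec, dotProduct, Matrix.conjTranspose_apply, evalM_apply,
          Polynomial.eval_finset_sum, map_sum, mul_comm]
      show Polynomial.IsRoot _ _
      rw [Polynomial.IsRoot.def, this, hytk, map_zero]
    have hvm : Matrix.vecMul (star x) ((R).map fun q => q.coeff m) = 0 := by
      funext k
      have := congrArg (fun p => Polynomial.coeff p m) (hpoly k)
      simp only [Polynomial.finset_sum_coeff, Polynomial.coeff_mul_C,
        Polynomial.coeff_zero] at this
      simp only [Matrix.vecMul, dotProduct, Matrix.map_apply, Pi.zero_apply]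
      rw [← this]
      exact Finset.sum_congr rfl fun j _ => by
        simp [Pi.star_apply, RCLike.star_def, mul_comm]
    have : ((R).map fun q => q.coeff m).det = 0 :=
      Matrix.exists_vecMul_eq_zero_iff.mp ⟨star x, by simpa using hx0, hvm⟩
    exact hdet this
  obtain ⟨t₀, ht₀, hyt₀⟩ := hex
  have hpos : 0 < f t₀ := by
    have := (Wt.posdef t₀ ht₀).re_dotProduct_pos hyt₀
    rw [RCLike.re_to_complex] at this
    rw [hf]
    simpa [hgy t₀] using this
  -- continuity of f on Ioo a b
  have hfc : ContinuousOn f (Set.Ioo a b) := by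
    have : ContinuousOn g (Set.Ioo a b) := by
      rw [hgexp]
      refine continuousOn_finset_sum _ fun i _ => continuousOn_finset_sum _ fun j _ => ?_
      exact (continuousOn_const.mul (entry_continuousOn Wt R R i j)).mul continuousOn_const
    exact Complex.continuous_re.comp_continuousOn this
  -- find a subinterval where f is positive
  have hca : ContinuousAt f t₀ := hfc.continuousAt (Ioo_mem_nhds ht₀.1 ht₀.2)
  have hnh : {t : ℝ | 0 < f t} ∩ Set.Ioo a b ∈ nhds t₀ := by
    refine Filter.inter_mem ?_ (Ioo_mem_nhds ht₀.1 ht₀.2)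
    exact hca.preimage_mem_nhds (Ioi_mem_nhds hpos)
  obtain ⟨c, d, hcd, hsub⟩ := mem_nhds_iff_exists_Ioo_subset.mp hnh
  have hcd' : c < d := lt_trans hcd.1 hcd.2
  have hIoo : Set.Ioo c d ⊆ Set.Ioo a b := fun t ht => (hsub ht).2
  have hac : a ≤ c := ((Set.Ioo_subset_Ioo_iff hcd').mp hIoo).1
  have hdb : d ≤ b := ((Set.Ioo_subset_Ioo_iff hcd').mp hIoo).2
  have hcb : c < b := lt_of_lt_of_le hcd' hdb
  have had : a < d := lt_of_le_of_lt hac hcd'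
  have hsubIcc : ∀ {u v : ℝ}, a ≤ u → u ≤ v → v ≤ b → IntervalIntegrable f volume u v := by
    intro u v h1 h2 h3
    refine hfint.mono_set ?_
    rw [Set.uIcc_of_le h2, Set.uIcc_of_le hab.le]
    exact Set.Icc_subset_Icc h1 h3
  have h_ac := hsubIcc (le_refl a) hac (le_of_lt hcb)
  have h_cd := hsubIcc hac hcd'.le hdb
  have h_db := hsubIcc (le_of_lt had) hdb (le_refl b)
  have h_cb := hsubIcc hac (le_trans hcd'.le hdb) (le_refl b)
  have hane : ∀ᵐ t : ℝ ∂volume, t ≠ a ∧ t ≠ b := by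
    filter_upwards [measure_eq_zero_iff_ae_notMem.mp
        (Real.volume_singleton : (volume : Measure ℝ) {a} = 0),
      measure_eq_zero_iff_ae_notMem.mp
        (Real.volume_singleton : (volume : Measure ℝ) {b} = 0)] with t h1 h2
    exact ⟨h1, h2⟩
  have hn1 : 0 ≤ ∫ t in a..c, f t := by
    refine intervalIntegral.integral_nonneg_of_ae_restrict hac ?_
    rw [Filter.EventuallyLE, ae_restrict_iff' measurableSet_Icc]
    filter_upwards [hane] with t hne hmem
    exact hnonneg t ⟨lt_of_le_of_ne hmem.1 (Ne.symm hne.1), lt_of_le_of_lt hmem.2 hcb⟩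
  have hn3 : 0 ≤ ∫ t in d..b, f t := by
    refine intervalIntegral.integral_nonneg_of_ae_restrict hdb ?_
    rw [Filter.EventuallyLE, ae_restrict_iff' measurableSet_Icc]
    filter_upwards [hane] with t hne hmem
    exact hnonneg t ⟨lt_of_lt_of_le had hmem.1, lt_of_le_of_ne hmem.2 hne.2⟩
  have hmid : 0 < ∫ t in c..d, f t :=
    intervalIntegral.intervalIntegral_pos_of_pos_on h_cd (fun t ht => (hsub ht).1) hcd'
  have e1 : (∫ t in a..c, f t) + (∫ t in c..b, f t) = ∫ t in a..b, f t :=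
    intervalIntegral.integral_add_adjacent_intervals h_ac h_cb
  have e2 : (∫ t in c..d, f t) + (∫ t in d..b, f t) = ∫ t in c..b, f t :=
    intervalIntegral.integral_add_adjacent_intervals h_cd h_db
  rw [hfzero] at e1
  linarith
end Positivity


-- span and relate layer (to be concatenated)

lemma matC_apply (M : Matrix (Fin L) (Fin L) ℂ) (i j : Fin L) :
    matC M i j = Polynomial.C (M i j) := rfl

lemma degree_matC_mul {M : Matrix (Fin L) (Fin L) ℂ} {X : MP L} {n : ℕ}
    (hX : ∀ i j, (X i j).degree ≤ (n : WithBot ℕ)) :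
    ∀ i j, ((matC M * X) i j).degree ≤ (n : WithBot ℕ) := by
  intro i j
  rw [Matrix.mul_apply]
  refine le_trans (Polynomial.degree_sum_le _ _) (Finset.sup_le fun k _ => ?_)
  refine le_trans (Polynomial.degree_mul_le _ _) ?_
  refine le_trans (add_le_add (Polynomial.degree_C_le (a := M i k)) (hX k j)) ?_
  rw [zero_add]

lemma coeff_matC_mul (M : Matrix (Fin L) (Fin L) ℂ) (X : MP L) (d : ℕ) (i j : Fin L) :
    ((matC M * X) i j).coeff d = (M * (X.map fun q => q.coeff d)) i j := by
  rw [Matrix.mul_apply, Polynomial.finset_sum_coeff, Matrix.mul_apply]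
  exact Finset.sum_congr rfl fun k _ => by
    rw [matC_apply, Polynomial.coeff_C_mul, Matrix.map_apply]

lemma span_lemma (P : ℕ → MP L)
    (hdeg : ∀ (n : ℕ) (i j : Fin L), ((P n) i j).degree ≤ (n : WithBot ℕ))
    (hlead : ∀ n : ℕ, ((P n).map fun q => q.coeff n).det ≠ 0) :
    ∀ (n : ℕ) (R : MP L), (∀ i j, (R i j).degree ≤ (n : WithBot ℕ)) →
      ∃ Cc : ℕ → Matrix (Fin L) (Fin L) ℂ,
        R = ∑ k ∈ Finset.range (n+1), matC (Cc k) * P k := by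
  intro n
  induction n with
  | zero =>
      intro R hR
      have hL0 : IsUnit ((P 0).map fun q => q.coeff 0).det := isUnit_iff_ne_zero.mpr (hlead 0)
      set L0 := (P 0).map fun q => q.coeff 0 with hL0def
      refine ⟨fun _ => (R.map fun q => q.coeff 0) * L0⁻¹, ?_⟩
      rw [Finset.sum_range_one]
      have hP0 : P 0 = matC L0 := by
        refine Matrix.ext fun i j => ?_
        rw [matC_apply, hL0def, Matrix.map_apply]
        exact Polynomial.eq_C_of_degree_le_zero (by exact_mod_cast hdeg 0 i j)
      rw [hP0, ← matC_mul, Matrix.nonsing_inv_mul_cancel_right _ _ hL0]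
      refine Matrix.ext fun i j => ?_
      rw [matC_apply, Matrix.map_apply]
      exact Polynomial.eq_C_of_degree_le_zero (by exact_mod_cast hR i j)
  | succ n ih =>
      intro R hR
      have hLn : IsUnit ((P (n+1)).map fun q => q.coeff (n+1)).det :=
        isUnit_iff_ne_zero.mpr (hlead (n+1))
      set Ln := (P (n+1)).map fun q => q.coeff (n+1) with hLndef
      set Cn := (R.map fun q => q.coeff (n+1)) * Ln⁻¹ with hCndef
      set R' := R - matC Cn * P (n+1) with hR'def
      have hdegR' : ∀ i j, (R' i j).degree ≤ (n : WithBot ℕ) := by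
        intro i j
        rw [Polynomial.degree_le_iff_coeff_zero]
        intro d hd
        have hdn : n < d := by exact_mod_cast hd
        have hsub : (R' i j) = R i j - (matC Cn * P (n+1)) i j := rfl
        rw [hsub, Polynomial.coeff_sub]
        rcases Nat.lt_or_ge (n+1) d with hbig | hsmall
        · have hcast : ((n+1 : ℕ) : WithBot ℕ) < (d : WithBot ℕ) := by exact_mod_cast hbig
          have h1 : (R i j).coeff d = 0 :=
            Polynomial.coeff_eq_zero_of_degree_lt (lt_of_le_of_lt (hR i j) hcast)
          have h2 : ((matC Cn * P (n+1)) i j).coeff d = 0 :=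
            Polynomial.coeff_eq_zero_of_degree_lt
              (lt_of_le_of_lt (degree_matC_mul (hdeg (n+1)) i j) hcast)
          rw [h1, h2, sub_zero]
        · have hdeq : d = n + 1 := by omega
          subst hdeq
          rw [coeff_matC_mul, hCndef, Matrix.nonsing_inv_mul_cancel_right _ _ hLn,
            Matrix.map_apply, sub_self]
      obtain ⟨Cc, hCc⟩ := ih R' hdegR'
      refine ⟨fun k => if k = n+1 then Cn else Cc k, ?_⟩
      rw [Finset.sum_range_succ]
      simp only [if_pos rfl]
      have : ∑ k ∈ Finset.range (n+1), matC (if k = n+1 then Cn else Cc k) * P k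
          = ∑ k ∈ Finset.range (n+1), matC (Cc k) * P k := by
        refine Finset.sum_congr rfl fun k hk => ?_
        rw [if_neg (by simp only [Finset.mem_range] at hk; omega)]
      rw [this, ← hCc, hR'def]
      exact (sub_add_cancel _ _).symm


lemma matC_def (M : Matrix (Fin L) (Fin L) ℂ) : M.map Polynomial.C = matC M := rfl

lemma starMP_matC_mul (A : Matrix (Fin L) (Fin L) ℂ) (X : MP L) :
    starMP (matC A * X) = starMP X * matC Aᴴ := by
  refine Matrix.ext fun i j => ?_
  show ((matC A * X) j i).map (starRingEnd ℂ) = _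
  rw [Matrix.mul_apply, Matrix.mul_apply]
  rw [Polynomial.map_sum]
  refine Finset.sum_congr rfl fun k _ => ?_
  rw [matC_apply, Polynomial.map_mul, Polynomial.map_C]
  show Polynomial.C ((starRingEnd ℂ) (A j k)) * (X k i).map (starRingEnd ℂ)
    = starMP X i k * matC Aᴴ k j
  rw [matC_apply, Matrix.conjTranspose_apply]
  show _ = (X k i).map (starRingEnd ℂ) * Polynomial.C (star (A j k))
  rw [mul_comm]
  rfl

section Relate
variable {a b : ℝ} (hab : a < b) (Wt : MatrixWeight L a b)

include hab in
lemma relate {P Q : ℕ → MP L} (hP : IsMOPS Wt P) (hQ : IsMOPS Wt Q) (n : ℕ) :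
    ∃ A : Matrix (Fin L) (Fin L) ℂ, IsUnit A ∧ Q n = matC A * P n := by
  obtain ⟨hdegP, hleadP, horthP⟩ := hP
  obtain ⟨hdegQ, hleadQ, horthQ⟩ := hQ
  obtain ⟨Cc, hCc⟩ := span_lemma P hdegP hleadP n (Q n) (hdegQ n)
  have horthQP : ∀ m, m < n → mop Wt (Q n) (P m) = 0 := by
    intro m hm
    obtain ⟨Bc, hBc⟩ := span_lemma Q hdegQ hleadQ m (P m) (hdegP m)
    rw [hBc, mop_sum_matC_right hab Wt _ _ _ _]
    refine Finset.sum_eq_zero fun j hj => ?_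
    have hjn : n ≠ j := by
      simp only [Finset.mem_range] at hj; omega
    rw [horthQ n j hjn, Matrix.zero_mul]
  have hCm : ∀ m, m < n → Cc m = 0 := by
    intro m hm
    have h0 : ∑ k ∈ Finset.range (n+1), Cc k * mop Wt (P k) (P m) = 0 := by
      rw [← mop_sum_matC_left hab Wt _ _ _ _, ← hCc, horthQP m hm]
    have hsingle : ∑ k ∈ Finset.range (n+1), Cc k * mop Wt (P k) (P m)
        = Cc m * mop Wt (P m) (P m) := by
      refine Finset.sum_eq_single m (fun k _ hkm => ?_) (fun hmem => ?_)
      · rw [horthP k m hkm, Matrix.mul_zero]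
      · exact absurd (Finset.mem_range.mpr (by omega)) hmem
    rw [hsingle] at h0
    have hu : IsUnit (mop Wt (P m) (P m)).det :=
      (Matrix.isUnit_iff_isUnit_det _).mp (mop_self_isUnit hab Wt (P m) m (hleadP m))
    calc Cc m = Cc m * mop Wt (P m) (P m) * (mop Wt (P m) (P m))⁻¹ :=
          (Matrix.mul_nonsing_inv_cancel_right _ _ hu).symm
      _ = 0 := by rw [h0, Matrix.zero_mul]
  have hQn : Q n = matC (Cc n) * P n := by
    rw [hCc, Finset.sum_range_succ]
    have hzero : ∑ k ∈ Finset.range n, matC (Cc k) * P k = 0 := by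
      refine Finset.sum_eq_zero fun k hk => ?_
      have : Cc k = 0 := hCm k (Finset.mem_range.mp hk)
      rw [this]
      have : matC (0 : Matrix (Fin L) (Fin L) ℂ) = 0 := by
        refine Matrix.ext fun i j => ?_
        rw [matC_apply]
        simp
      rw [this, Matrix.zero_mul]
    rw [hzero, zero_add]
  have hlead_eq : (Q n).map (fun q => q.coeff n)
      = Cc n * ((P n).map fun q => q.coeff n) := by
    refine Matrix.ext fun i j => ?_
    rw [Matrix.map_apply, hQn, coeff_matC_mul]
  have hdetC : IsUnit (Cc n) := by
    rw [Matrix.isUnit_iff_isUnit_det, isUnit_iff_ne_zero]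
    intro hc0
    apply hleadQ n
    rw [hlead_eq, Matrix.det_mul, hc0, zero_mul]
  exact ⟨Cc n, hdetC, hQn⟩

include hab in
lemma DW_transfer {P Q : ℕ → MP L} (hP : IsMOPS Wt P) (hQ : IsMOPS Wt Q)
    {D : MP L → MP L} (h : DWmem Wt P D) : DWmem Wt Q D := by
  obtain ⟨hInD, hL⟩ := h
  refine ⟨hInD, fun n => ?_⟩
  obtain ⟨A, hA, hQP⟩ := relate hab Wt hP hQ n
  obtain ⟨Λ, hΛn⟩ := hL n
  obtain ⟨s, F, hF, hrep⟩ := hInD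
  have hDmul : ∀ (X : MP L) (M : Matrix (Fin L) (Fin L) ℂ),
      D (X * matC M) = D X * matC M := fun X M => by
    rw [hrep, hrep, rep_mul_matC]
  have hstar : starMP (Q n) = starMP (P n) * matC Aᴴ := by
    rw [hQP, starMP_matC_mul]
  have hAH : IsUnit (Aᴴ).det := by
    rw [Matrix.det_conjTranspose]
    exact ((Matrix.isUnit_iff_isUnit_det _).mp hA).star
  refine ⟨Aᴴ⁻¹ * Λ * Aᴴ, ?_⟩
  have key : Aᴴ * (Aᴴ⁻¹ * Λ * Aᴴ) = Λ * Aᴴ := by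
    rw [← Matrix.mul_assoc, ← Matrix.mul_assoc, Matrix.mul_nonsing_inv _ hAH,
      Matrix.one_mul]
  calc D (starMP (Q n)) = D (starMP (P n) * matC Aᴴ) := by rw [hstar]
    _ = D (starMP (P n)) * matC Aᴴ := hDmul _ _
    _ = starMP (P n) * matC Λ * matC Aᴴ := by rw [hΛn]; rfl
    _ = starMP (P n) * matC (Λ * Aᴴ) := by rw [Matrix.mul_assoc, ← matC_mul]
    _ = starMP (P n) * matC (Aᴴ * (Aᴴ⁻¹ * Λ * Aᴴ)) := by rw [key]
    _ = starMP (P n) * matC Aᴴ * matC (Aᴴ⁻¹ * Λ * Aᴴ) := by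
        rw [matC_mul]
        exact (Matrix.mul_assoc _ _ _).symm
    _ = starMP (Q n) * (Aᴴ⁻¹ * Λ * Aᴴ).map Polynomial.C := by rw [← hstar]; rfl

end Relate
end DWaux

/-- `𝒟(W)` is a subalgebra of `𝒟` (closed under addition, scalar multiplication and
composition) and does not depend on the choice of the orthogonal sequence. -/
theorem DW_subalgebra_and_independent (L : ℕ) (a b : ℝ) (hab : a < b)
    (Wt : MatrixWeight L a b) (P : ℕ → MP L) (hP : IsMOPS Wt P) :
    (∀ D₁ D₂ : MP L → MP L, DWmem Wt P D₁ → DWmem Wt P D₂ →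
        DWmem Wt P (fun F => D₁ F + D₂ F))
      ∧ (∀ (c : ℂ) (D : MP L → MP L), DWmem Wt P D → DWmem Wt P (fun F => c • D F))
      ∧ (∀ D₁ D₂ : MP L → MP L, DWmem Wt P D₁ → DWmem Wt P D₂ → DWmem Wt P (D₁ ∘ D₂))
      ∧ (∀ Q : ℕ → MP L, IsMOPS Wt Q →
          ∀ D : MP L → MP L, DWmem Wt P D ↔ DWmem Wt Q D) := by
  classical
  refine ⟨?_, ?_, ?_, ?_⟩
  · -- addition
    intro D₁ D₂ h₁ h₂
    refine ⟨DWaux.InD_add h₁.1 h₂.1, fun n => ?_⟩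
    obtain ⟨Λ₁, e₁⟩ := h₁.2 n
    obtain ⟨Λ₂, e₂⟩ := h₂.2 n
    refine ⟨Λ₁ + Λ₂, ?_⟩
    show D₁ (starMP (P n)) + D₂ (starMP (P n)) = _
    rw [e₁, e₂, ← mul_add, DWaux.matC_def, DWaux.matC_def, DWaux.matC_def,
      ← DWaux.matC_add]
  · -- scalar multiplication
    intro c D h
    refine ⟨DWaux.InD_smul c h.1, fun n => ?_⟩
    obtain ⟨Λ, e⟩ := h.2 n
    refine ⟨c • Λ, ?_⟩
    show c • D (starMP (P n)) = _
    rw [e]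
    have hsm : ((c • Λ).map Polynomial.C) = c • (Λ.map Polynomial.C) := by
      refine Matrix.ext fun i j => ?_
      show Polynomial.C (c • Λ i j) = c • Polynomial.C (Λ i j)
      rw [Polynomial.smul_C]
    rw [hsm]
    exact (mul_smul_comm c _ _).symm
  · -- composition
    intro D₁ D₂ h₁ h₂
    refine ⟨DWaux.InD_comp h₁.1 h₂.1, fun n => ?_⟩
    obtain ⟨Λ₁, e₁⟩ := h₁.2 n
    obtain ⟨Λ₂, e₂⟩ := h₂.2 n
    obtain ⟨s, F, hF, hrep⟩ := h₁.1
    refine ⟨Λ₁ * Λ₂, ?_⟩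
    show D₁ (D₂ (starMP (P n))) = _
    rw [e₂, DWaux.matC_def]
    have hmul : D₁ (starMP (P n) * DWaux.matC Λ₂)
        = D₁ (starMP (P n)) * DWaux.matC Λ₂ := by
      rw [hrep, hrep, DWaux.rep_mul_matC]
    rw [hmul, e₁, DWaux.matC_def, DWaux.matC_def, Matrix.mul_assoc, ← DWaux.matC_mul]
  · -- independence of the orthogonal sequence
    intro Q hQ D
    exact ⟨fun h => DWaux.DW_transfer hab Wt hP hQ h,
      fun h => DWaux.DW_transfer hab Wt hQ hP h⟩
end
end

section
/- Fix a sequence {P_n} of matrix orthogonal polynomials with respect to W. For each n ≥ 0 the map Λ_n : 𝒟(W) → M_{L×L}(ℂ) sending D to the unique matrix Λ_n(D) with D(P_n*) = P_n*·Λ_n(D) is an algebra homomorphism: Λ_n(D₁+D₂) = Λ_n(D₁)+Λ_n(D₂), Λ_n(cD) = cΛ_n(D) for c ∈ ℂ, and Λ_n(D₁D₂) = Λ_n(D₁)Λ_n(D₂) for all D₁, D₂ ∈ 𝒟(W), where D₁D₂ denotes composition of differential operators. -/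
open Polynomial Matrix MeasureTheory
open scoped ComplexOrder

noncomputable section

lemma pder_mul_constRight {L : ℕ} (P : MP L) (M : Matrix (Fin L) (Fin L) ℂ) :
    pder (P * M.map Polynomial.C) = pder P * M.map Polynomial.C := by
  ext i j
  simp [pder, Matrix.mul_apply, Matrix.map_apply, derivative_mul]

lemma pder_iter_mul_constRight {L : ℕ} (k : ℕ) (P : MP L)
    (M : Matrix (Fin L) (Fin L) ℂ) :
    pder^[k] (P * M.map Polynomial.C) = pder^[k] P * M.map Polynomial.C := by
  induction k generalizing P with
  | zero => rfl
  | succ k ih =>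
    rw [Function.iterate_succ_apply, pder_mul_constRight, ih, ← Function.iterate_succ_apply]

lemma D_mul_constRight {L : ℕ} {D : MP L → MP L} (hD : InD D) (P : MP L)
    (M : Matrix (Fin L) (Fin L) ℂ) :
    D (P * M.map Polynomial.C) = D P * M.map Polynomial.C := by
  obtain ⟨s, F, _, hF⟩ := hD
  rw [hF, hF, Finset.sum_mul]
  refine Finset.sum_congr rfl fun i _ => ?_
  rw [pder_iter_mul_constRight, mul_assoc]

/-- For each `n`, the map `D ↦ Λₙ(D)` is an algebra homomorphism on `𝒟(W)`:
it is additive, `ℂ`-homogeneous, and multiplicative with respect to composition. -/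
theorem Lambda_algebra_hom (L : ℕ) (a b : ℝ) (hab : a < b)
    (Wt : MatrixWeight L a b) (P : ℕ → MP L) (hP : IsMOPS Wt P) (n : ℕ)
    (D₁ D₂ : MP L → MP L) (h₁ : DWmem Wt P D₁) (h₂ : DWmem Wt P D₂)
    (Λ₁ Λ₂ : Matrix (Fin L) (Fin L) ℂ)
    (hΛ₁ : D₁ (starMP (P n)) = starMP (P n) * Λ₁.map Polynomial.C)
    (hΛ₂ : D₂ (starMP (P n)) = starMP (P n) * Λ₂.map Polynomial.C) :
    (D₁ (starMP (P n)) + D₂ (starMP (P n)) = starMP (P n) * (Λ₁ + Λ₂).map Polynomial.C)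
      ∧ (∀ c : ℂ, c • D₁ (starMP (P n)) = starMP (P n) * (c • Λ₁).map Polynomial.C)
      ∧ (D₁ (D₂ (starMP (P n))) = starMP (P n) * (Λ₁ * Λ₂).map Polynomial.C) := by
  refine ⟨?_, ?_, ?_⟩
  · rw [hΛ₁, hΛ₂, ← mul_add]
    congr 1
    ext i j
    simp [Matrix.map_apply]
  · intro c
    rw [hΛ₁, ← Matrix.mul_smul]
    congr 1
    ext i j
    simp [Matrix.map_apply, Polynomial.smul_C]
  · rw [hΛ₂, D_mul_constRight h₁.1, hΛ₁, mul_assoc]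
    congr 1
    ext i j
    simp [Matrix.map_apply, Matrix.mul_apply, Polynomial.C_mul]
end
end

section
/- Fix a sequence {P_n} of matrix orthogonal polynomials with respect to W. The family {Λ_n}_{n≥0} separates points of 𝒟(W): if D₁, D₂ ∈ 𝒟(W) satisfy Λ_n(D₁) = Λ_n(D₂) for all n ≥ 0, then D₁ = D₂ (i.e. the corresponding differential operators have the same coefficients). -/
open Polynomial Matrix MeasureTheory
open scoped ComplexOrder

noncomputable section

/-! ### Auxiliary lemmas -/

lemma pder_add {L : ℕ} (A B : MP L) : pder (A + B) = pder A + pder B := by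
  ext i j; simp [pder]

lemma pder_zero {L : ℕ} : pder (0 : MP L) = 0 := by
  ext i j; simp [pder]

lemma pder_mulC {L : ℕ} (A : MP L) (C : Matrix (Fin L) (Fin L) ℂ) :
    pder (A * C.map Polynomial.C) = pder A * C.map Polynomial.C := by
  ext i j
  simp only [pder, Matrix.mul_apply, Matrix.of_apply, Matrix.map_apply, map_sum,
    derivative_mul, derivative_C, mul_zero, add_zero, zero_mul, zero_add]

lemma pder_iter_add {L : ℕ} (n : ℕ) : ∀ A B : MP L,
    pder^[n] (A + B) = pder^[n] A + pder^[n] B := by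
  induction n with
  | zero => intro A B; simp
  | succ n ih => intro A B; rw [Function.iterate_succ_apply, Function.iterate_succ_apply,
      Function.iterate_succ_apply, pder_add, ih]

lemma pder_iter_zero {L : ℕ} (n : ℕ) : pder^[n] (0 : MP L) = 0 := by
  induction n with
  | zero => simp
  | succ n ih => rw [Function.iterate_succ_apply, pder_zero, ih]

lemma pder_iter_mulC {L : ℕ} (n : ℕ) : ∀ (A : MP L) (C : Matrix (Fin L) (Fin L) ℂ),
    pder^[n] (A * C.map Polynomial.C) = pder^[n] A * C.map Polynomial.C := by
  induction n with
  | zero => intro A C; simp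
  | succ n ih => intro A C; rw [Function.iterate_succ_apply, Function.iterate_succ_apply,
      pder_mulC, ih]

lemma wb_lt_succ {d : WithBot ℕ} {N : ℕ} :
    d < ((N + 1 : ℕ) : WithBot ℕ) ↔ d ≤ (N : WithBot ℕ) := by
  cases d with
  | bot => simpa using WithBot.bot_lt_coe (N + 1)
  | coe n =>
    rw [Nat.cast_withBot, Nat.cast_withBot, WithBot.coe_lt_coe, WithBot.coe_le_coe]
    exact Nat.lt_succ_iff

lemma deg_lt_of {p : Polynomial ℂ} {N : ℕ} (h1 : p.degree ≤ (N : WithBot ℕ))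
    (h2 : p.coeff N = 0) : p.degree < (N : WithBot ℕ) := by
  rcases lt_or_eq_of_le h1 with h | h
  · exact h
  · exact absurd h2 (Polynomial.coeff_ne_zero_of_eq_degree h)

/-- The key induction: a map that is additive, commutes with right multiplication by
constant matrices, and kills all the `Pₙ*`, kills every matrix polynomial. -/
lemma T_vanishes {L : ℕ} (P : ℕ → MP L)
    (hdeg : ∀ (n : ℕ) (i j : Fin L), ((P n) i j).degree ≤ (n : WithBot ℕ))
    (hdet : ∀ n : ℕ, ((P n).map fun q => q.coeff n).det ≠ 0)
    (T : MP L → MP L)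
    (Tadd : ∀ A B, T (A + B) = T A + T B)
    (TmulC : ∀ (A : MP L) (C : Matrix (Fin L) (Fin L) ℂ),
      T (A * C.map Polynomial.C) = T A * C.map Polynomial.C)
    (Tzero : T 0 = 0)
    (hS : ∀ n, T (starMP (P n)) = 0) :
    ∀ (N : ℕ) (Q : MP L), (∀ i j, (Q i j).degree < (N : WithBot ℕ)) → T Q = 0 := by
  intro N
  induction N with
  | zero =>
    intro Q hQ
    have hQ0 : Q = 0 := by
      funext i j
      have h := hQ i j
      rw [Nat.cast_zero] at h
      exact Polynomial.degree_eq_bot.mp (Nat.WithBot.lt_zero_iff.mp h)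
    rw [hQ0, Tzero]
  | succ N ih =>
    intro Q hQ
    set S := starMP (P N) with hSdef
    set A := ((P N).map fun q => q.coeff N) with hA
    have hBA : ∀ i k : Fin L, (S i k).coeff N = Aᴴ i k := by
      intro i k
      simp [hSdef, starMP, hA, Matrix.conjTranspose_apply, Polynomial.coeff_map]
    have hdetB : (Aᴴ).det ≠ 0 := by
      rw [Matrix.det_conjTranspose]
      simpa using hdet N
    set M := Q.map fun q => q.coeff N with hM
    set C := (Aᴴ)⁻¹ * M with hC
    have hBC : Aᴴ * C = M := by
      rw [hC, ← Matrix.mul_assoc,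
        Matrix.mul_nonsing_inv _ (isUnit_iff_ne_zero.mpr hdetB), Matrix.one_mul]
    have hSdeg : ∀ i j, (S i j).degree ≤ (N : WithBot ℕ) := by
      intro i j
      exact (Polynomial.degree_map_le).trans (hdeg N j i)
    have hProdDeg : ∀ i j, ((S * C.map Polynomial.C) i j).degree ≤ (N : WithBot ℕ) := by
      intro i j
      rw [Matrix.mul_apply]
      refine (Polynomial.degree_sum_le _ _).trans ?_
      refine Finset.sup_le fun k _ => ?_
      calc (S i k * (C.map Polynomial.C) k j).degree
          ≤ (S i k).degree + ((C.map Polynomial.C) k j).degree :=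
            Polynomial.degree_mul_le _ _
        _ ≤ (N : WithBot ℕ) + 0 := add_le_add (hSdeg i k)
            (by simpa [Matrix.map_apply] using (Polynomial.degree_C_le))
        _ = N := add_zero _
    have hProdCoeff : ∀ i j, ((S * C.map Polynomial.C) i j).coeff N = M i j := by
      intro i j
      rw [Matrix.mul_apply, Polynomial.finset_sum_coeff]
      have hterm : ∀ k, (S i k * (C.map Polynomial.C) k j).coeff N
          = Aᴴ i k * C k j := by
        intro k
        rw [Matrix.map_apply, Polynomial.coeff_mul_C, hBA]
      rw [Finset.sum_congr rfl fun k _ => hterm k, ← Matrix.mul_apply, hBC]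
    set Q' := Q - S * C.map Polynomial.C with hQ'
    have hQ'deg : ∀ i j, (Q' i j).degree < (N : WithBot ℕ) := by
      intro i j
      refine deg_lt_of ?_ ?_
      · have h1 : (Q i j).degree ≤ (N : WithBot ℕ) := wb_lt_succ.mp (by exact_mod_cast hQ i j)
        calc (Q' i j).degree = ((Q i j) - (S * C.map Polynomial.C) i j).degree := by
              rw [hQ']; rfl
          _ ≤ max (Q i j).degree ((S * C.map Polynomial.C) i j).degree :=
              Polynomial.degree_sub_le _ _
          _ ≤ N := max_le h1 (hProdDeg i j)
      · have : (Q' i j) = Q i j - (S * C.map Polynomial.C) i j := by rw [hQ']; rfl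
        rw [this, Polynomial.coeff_sub, hProdCoeff]
        simp [hM, Matrix.map_apply]
    have hsplit : Q = Q' + S * C.map Polynomial.C := by rw [hQ', sub_add_cancel]
    rw [hsplit, Tadd, ih Q' hQ'deg, TmulC, hS, zero_mul, add_zero]

/-- The family `{Λₙ}` separates points of `𝒟(W)`: two operators of `𝒟(W)` with the same
eigenvalue matrices `Λₙ` for all `n` are equal. -/
theorem Lambda_separates_points (L : ℕ) (a b : ℝ) (hab : a < b)
    (Wt : MatrixWeight L a b) (P : ℕ → MP L) (hP : IsMOPS Wt P)
    (D₁ D₂ : MP L → MP L) (h₁ : DWmem Wt P D₁) (h₂ : DWmem Wt P D₂)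
    (h : ∀ n : ℕ, ∃ Λ : Matrix (Fin L) (Fin L) ℂ,
      D₁ (starMP (P n)) = starMP (P n) * Λ.map Polynomial.C
        ∧ D₂ (starMP (P n)) = starMP (P n) * Λ.map Polynomial.C) :
    D₁ = D₂ := by
  obtain ⟨s₁, F, hF, hFrep⟩ := h₁.1
  obtain ⟨s₂, G, hG, hGrep⟩ := h₂.1
  set T : MP L → MP L := fun Q => D₁ Q - D₂ Q with hT
  have Tadd : ∀ A B, T (A + B) = T A + T B := by
    intro A B
    simp only [hT, hFrep, hGrep, pder_iter_add, mul_add, Finset.sum_add_distrib]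
    abel
  have TmulC : ∀ (A : MP L) (C : Matrix (Fin L) (Fin L) ℂ),
      T (A * C.map Polynomial.C) = T A * C.map Polynomial.C := by
    intro A C
    simp only [hT, hFrep, hGrep, pder_iter_mulC, ← Matrix.mul_assoc, ← Finset.sum_mul,
      sub_mul]
  have Tzero : T 0 = 0 := by
    simp only [hT, hFrep, hGrep, pder_iter_zero, mul_zero, Finset.sum_const_zero, sub_zero]
  have hS : ∀ n, T (starMP (P n)) = 0 := by
    intro n
    obtain ⟨Λ, e1, e2⟩ := h n
    simp only [hT, e1, e2, sub_self]
  have key := T_vanishes P hP.1 hP.2.1 T Tadd TmulC Tzero hS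
  funext Q
  have hQdeg : ∀ i j, (Q i j).degree <
      (((Finset.univ.sup fun p : Fin L × Fin L => (Q p.1 p.2).natDegree) + 1 : ℕ) :
        WithBot ℕ) := by
    intro i j
    refine lt_of_le_of_lt Polynomial.degree_le_natDegree ?_
    rw [Nat.cast_withBot, Nat.cast_withBot, WithBot.coe_lt_coe]
    exact Nat.lt_succ_of_le (Finset.le_sup (f := fun p : Fin L × Fin L => (Q p.1 p.2).natDegree) (Finset.mem_univ (i, j)))
  have := key _ Q hQdeg
  exact sub_eq_zero.mp this
end
end

section
/- Let {Q_n}_{n≥0} be the sequence of monic matrix orthogonal polynomials with respect to W (deg Q_n = n, leading coefficient the identity matrix, (Q_n,Q_m) = 0 for n ≠ m). Let D = Σ_{i=0}^s F_i(t) dⁱ/dtⁱ ∈ 𝒟 and suppose D(Q_n*) = Q_n*·Γ_n for all n ≥ 0. Then Γ_n = Σ_{i=0}^s [n]_i·A_iⁱ for all n ≥ 0, where A_iⁱ is the coefficient of tⁱ in the matrix polynomial F_i, [n]_i = n(n−1)⋯(n−i+1) for i ≥ 1, and [n]₀ = 1. -/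
open Polynomial Matrix MeasureTheory
open scoped ComplexOrder

noncomputable section

/-- Entries of an iterated entrywise derivative. -/
lemma pder_iter_apply {L : ℕ} (P : MP L) (i : ℕ) (r c : Fin L) :
    (pder^[i] P) r c = Polynomial.derivative^[i] (P r c) := by
  induction i generalizing P with
  | zero => rfl
  | succ i ih =>
    rw [Function.iterate_succ_apply, Function.iterate_succ_apply, ih]
    rfl

lemma prod_sub_eq_descFactorial (n i : ℕ) :
    (∏ t ∈ Finset.range i, ((n : ℂ) - t)) = (n.descFactorial i : ℂ) := by
  induction i with
  | zero => simp
  | succ i ih =>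
    rw [Finset.prod_range_succ, ih, Nat.descFactorial_succ]
    by_cases h : i ≤ n
    · push_cast [Nat.cast_sub h]
      ring
    · push_neg at h
      rw [Nat.descFactorial_eq_zero_iff_lt.mpr h]
      simp

lemma coeff_mul_iterate_derivative (p q : Polynomial ℂ) (i n : ℕ)
    (hp : p.degree ≤ (i : WithBot ℕ)) (hq : q.degree ≤ (n : WithBot ℕ)) :
    (p * Polynomial.derivative^[i] q).coeff n
      = (n.descFactorial i : ℂ) * (p.coeff i * q.coeff n) := by
  rw [Polynomial.coeff_mul]
  have hsmall : ∀ x y : ℕ, x + y = n → x < i →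
      p.coeff x * (Polynomial.derivative^[i] q).coeff y = 0 := by
    intro x y hxy hxi
    rw [Polynomial.coeff_iterate_derivative]
    have : q.coeff (y + i) = 0 := by
      apply Polynomial.coeff_eq_zero_of_degree_lt
      apply lt_of_le_of_lt hq
      exact_mod_cast Nat.lt_of_lt_of_le (by omega) le_rfl
    rw [this]
    simp
  by_cases hin : i ≤ n
  · rw [Finset.sum_eq_single (i, n - i)]
    · rw [Polynomial.coeff_iterate_derivative, Nat.sub_add_cancel hin, nsmul_eq_mul]
      ring
    · intro b hb hne
      rw [Finset.HasAntidiagonal.mem_antidiagonal] at hb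
      rcases lt_trichotomy b.1 i with h1 | h1 | h1
      · exact hsmall b.1 b.2 hb h1
      · exact absurd (Prod.ext h1 (by omega)) hne
      · have : p.coeff b.1 = 0 := by
          apply Polynomial.coeff_eq_zero_of_degree_lt
          exact lt_of_le_of_lt hp (by exact_mod_cast h1)
        rw [this, zero_mul]
    · intro h
      exact absurd (Finset.HasAntidiagonal.mem_antidiagonal.mpr (by omega)) h
  · push_neg at hin
    rw [Nat.descFactorial_eq_zero_iff_lt.mpr hin]
    rw [Finset.sum_eq_zero, Nat.cast_zero, zero_mul]
    intro b hb
    rw [Finset.HasAntidiagonal.mem_antidiagonal] at hb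
    exact hsmall b.1 b.2 hb (by omega)

/-- For the monic sequence `{Qₙ}` of matrix orthogonal polynomials and
`D = Σ_{i=0}^s F_i(t) dⁱ/dtⁱ ∈ 𝒟` with `D(Qₙ*) = Qₙ*·Γₙ`, one has
`Γₙ = Σ_{i=0}^s [n]_i · A_iⁱ`, where `A_iⁱ` is the coefficient of `tⁱ` in `F_i` and
`[n]_i = n(n−1)⋯(n−i+1)`. -/
theorem eigenvalue_of_monic (L : ℕ) (a b : ℝ) (hab : a < b)
    (Wt : MatrixWeight L a b) (Q : ℕ → MP L) (hQ : IsMOPS Wt Q)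
    (hmonic : ∀ n : ℕ, (Q n).map (fun q => q.coeff n) = 1)
    (s : ℕ) (F : ℕ → MP L)
    (hdeg : ∀ i : ℕ, i ≤ s → ∀ r c : Fin L, ((F i) r c).degree ≤ (i : WithBot ℕ))
    (Γ : ℕ → Matrix (Fin L) (Fin L) ℂ)
    (hΓ : ∀ n : ℕ,
      (∑ i ∈ Finset.range (s+1), F i * pder^[i] (starMP (Q n)))
        = starMP (Q n) * (Γ n).map Polynomial.C) :
    ∀ n : ℕ, Γ n = ∑ i ∈ Finset.range (s+1),
      (∏ t ∈ Finset.range i, ((n : ℂ) - t)) • (F i).map (fun q => q.coeff i) := by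
  intro n
  have hQdeg := hQ.1
  ext r c
  have h := congrArg (fun M : MP L => ((M r c).coeff n)) (hΓ n)
  beta_reduce at h
  -- coefficient of starMP (Q n) at degree n is the identity matrix (transposed)
  have hstar : ∀ k l : Fin L, ((starMP (Q n)) k l).coeff n = if l = k then 1 else 0 := by
    intro k l
    have : (Q n l k).coeff n = ((Q n).map (fun q => q.coeff n)) l k := rfl
    simp only [starMP, Matrix.of_apply, Polynomial.coeff_map, this, hmonic n,
      Matrix.one_apply]
    split <;> simp
  have hstardeg : ∀ k l : Fin L, ((starMP (Q n)) k l).degree ≤ (n : WithBot ℕ) := by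
    intro k l
    show ((Q n l k).map (starRingEnd ℂ)).degree ≤ (n : WithBot ℕ)
    exact le_trans Polynomial.degree_map_le (hQdeg n l k)
  -- compute LHS
  have hL : ((∑ i ∈ Finset.range (s+1), F i * pder^[i] (starMP (Q n))) r c).coeff n
      = ∑ i ∈ Finset.range (s+1),
          ((n.descFactorial i : ℂ)) * ((F i r c).coeff i) := by
    rw [Matrix.sum_apply, Polynomial.finset_sum_coeff]
    apply Finset.sum_congr rfl
    intro i hi
    rw [Finset.mem_range] at hi
    rw [Matrix.mul_apply, Polynomial.finset_sum_coeff]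
    have : ∀ k : Fin L, (F i r k * (pder^[i] (starMP (Q n))) k c).coeff n
        = (n.descFactorial i : ℂ) * ((F i r k).coeff i * (if c = k then 1 else 0)) := by
      intro k
      rw [pder_iter_apply, coeff_mul_iterate_derivative _ _ _ _
        (hdeg i (by omega) r k) (hstardeg k c), hstar k c]
    simp only [this]
    rw [Finset.sum_eq_single c]
    · simp
    · intro k _ hk
      simp [Ne.symm hk]
    · intro hc
      exact absurd (Finset.mem_univ c) hc
  -- compute RHS
  have hR : (((starMP (Q n)) * (Γ n).map Polynomial.C) r c).coeff n = Γ n r c := by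
    rw [Matrix.mul_apply, Polynomial.finset_sum_coeff]
    have : ∀ k : Fin L, ((starMP (Q n)) r k * Polynomial.C (Γ n k c)).coeff n
        = (if k = r then 1 else 0) * Γ n k c := by
      intro k
      rw [Polynomial.coeff_mul_C, hstar r k]
    simp only [this, Matrix.map_apply]
    rw [Finset.sum_eq_single r]
    · simp
    · intro k _ hk
      simp [hk]
    · intro hr
      exact absurd (Finset.mem_univ r) hr
  rw [hL, hR] at h
  rw [← h]
  rw [Matrix.sum_apply]
  apply Finset.sum_congr rfl
  intro i _
  rw [Matrix.smul_apply, Matrix.map_apply, prod_sub_eq_descFactorial, smul_eq_mul]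
end
end
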